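/- arXiv:1502.01572 — 4 statements merged into one kernel-verified Lean document; each statement's English description precedes it below -/
import Mathlib

section
/- Let u : ℝ → ℂ be 2π-periodic, absolutely continuous, with derivative u' ∈ L²(0,2π) and zero mean ∫₀^{2π} u(x) dx = 0. Then ‖u‖_∞² ≤ ‖u‖·‖u'‖ − (1/π)·‖u‖², where ‖·‖ is the L²(0,2π) norm and ‖u‖_∞ is the supremum norm. -/
open MeasureTheory Real

-- core hyperbolic inequality
lemma core_hyp (t : ℝ) (ht : 1/3 ≤ t) :
    (t * Real.cosh t - Real.sinh t) * (2*t^2+2*t+1) ≤ 2*t^3 * Real.sinh t := by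
  have h0 : (0:ℝ) ≤ 2*t := by linarith
  have hexp := Real.sum_le_exp_of_nonneg h0 6
  have hsum : ∑ i ∈ Finset.range 6, (2*t) ^ i / (Nat.factorial i) =
      1 + 2*t + 2*t^2 + (4/3)*t^3 + (2/3)*t^4 + (4/15)*t^5 := by
    simp [Finset.sum_range_succ, Nat.factorial]
    ring
  rw [hsum] at hexp
  have ha : 0 < Real.exp t := Real.exp_pos t
  have hb : 0 < Real.exp (-t) := Real.exp_pos (-t)
  have hab : Real.exp t * Real.exp (-t) = 1 := by
    rw [← Real.exp_add]; simp
  have haa : Real.exp t * Real.exp t = Real.exp (2*t) := by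
    rw [← Real.exp_add]; ring_nf
  have h1 : (4*t^3+4*t^2+3*t+1) ≤ (t+1) * (1 + 2*t + 2*t^2 + (4/3)*t^3 + (2/3)*t^4 + (4/15)*t^5) := by
    nlinarith [pow_nonneg (le_trans (by norm_num) ht) 3, pow_nonneg (le_trans (by norm_num) ht) 4,
      pow_nonneg (le_trans (by norm_num) ht) 5, sq_nonneg t]
  have key : (4*t^3+4*t^2+3*t+1) * Real.exp (-t) ≤ (t+1) * Real.exp t := by
    have h2 : (4*t^3+4*t^2+3*t+1) ≤ (t+1) * (Real.exp t * Real.exp t) := by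
      rw [haa]; nlinarith
    calc (4*t^3+4*t^2+3*t+1) * Real.exp (-t) ≤ ((t+1) * (Real.exp t * Real.exp t)) * Real.exp (-t) := by
          apply mul_le_mul_of_nonneg_right h2 hb.le
      _ = (t+1) * Real.exp t := by
          rw [mul_assoc, mul_assoc, hab]; ring
  rw [Real.cosh_eq, Real.sinh_eq]
  nlinarith [key]


lemma ptwise_cs (a b c d ε : ℝ) (hε : 0 < ε) :
    a*c + b*d ≤ ε*(a^2+b^2)/2 + (c^2+d^2)/(2*ε) := by
  have h1 : 0 ≤ (ε*a - c)^2 := sq_nonneg _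
  have h2 : 0 ≤ (ε*b - d)^2 := sq_nonneg _
  rw [show ε*(a^2+b^2)/2 + (c^2+d^2)/(2*ε) = (ε^2*(a^2+b^2) + (c^2+d^2))/(2*ε) by
    field_simp]
  rw [le_div_iff₀ (by positivity)]
  nlinarith [h1, h2]

lemma eps_sq (r P Q : ℝ) (hr : 0 ≤ r) (hP : 0 ≤ P) (hQ : 0 ≤ Q)
    (h : ∀ ε : ℝ, 0 < ε → r ≤ ε*P/2 + Q/(2*ε)) : r^2 ≤ P*Q := by
  rcases eq_or_lt_of_le hr with h0 | hr0
  · rw [← h0]; simpa using mul_nonneg hP hQ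
  rcases eq_or_lt_of_le hP with hP0 | hP0
  · exfalso
    have hε : 0 < Q/r + 1 := by positivity
    have := h (Q/r + 1) hε
    rw [← hP0] at this
    have h2 : Q / (2*(Q/r+1)) < r := by
      rw [div_lt_iff₀ (by positivity)]
      have : Q/r * r = Q := div_mul_cancel₀ Q (ne_of_gt hr0)
      nlinarith
    linarith
  · have h4 := h (r/P) (by positivity)
    have h3 : (r/P)*P = r := div_mul_cancel₀ r (ne_of_gt hP0)
    have h5 : r/2 ≤ Q/(2*(r/P)) := by nlinarith
    rw [le_div_iff₀ (by positivity)] at h5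
    have h6 := mul_le_mul_of_nonneg_right h5 hP
    have h7 : r/2 * (2*(r/P)) * P = r * r := by field_simp
    nlinarith

lemma per_ii {f : ℝ → ℝ} (hf : Function.Periodic f (2*π))
    (h : IntervalIntegrable f volume 0 (2*π)) (a : ℝ) :
    IntervalIntegrable f volume a (a + 2*π) := by
  have hT : (0:ℝ) < 2*π := by positivity
  have hseg : ∀ j : ℤ, IntervalIntegrable f volume (j*(2*π)) ((j+1)*(2*π)) := by
    intro j
    have h2 := h.comp_add_right ((-j)*(2*π))
    have heq : (fun x => f (x + (-j)*(2*π))) = f := by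
      funext z
      have := (hf.zsmul (-j)) z
      simpa [zsmul_eq_mul] using this
    rw [heq] at h2
    have e1 : (0:ℝ) - (-j)*(2*π) = j*(2*π) := by ring
    have e2 : (2*π) - (-j)*(2*π) = (j+1)*(2*π) := by ring
    rwa [e1, e2] at h2
  set j : ℤ := ⌊a / (2*π)⌋ with hj
  have hja : (j:ℝ)*(2*π) ≤ a := by
    have h1 : (j:ℝ) ≤ a / (2*π) := Int.floor_le (a / (2*π))
    calc (j:ℝ)*(2*π) ≤ (a/(2*π))*(2*π) := by nlinarith
      _ = a := by field_simp
  have haj : a + 2*π ≤ ((j:ℝ)+2)*(2*π) := by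
    have := Int.lt_floor_add_one (a / (2*π))
    have h3 : a < ((j:ℝ)+1)*(2*π) := by
      rw [← div_lt_iff₀ hT]; push_cast; linarith
    linarith
  have hbig : IntervalIntegrable f volume ((j:ℝ)*(2*π)) (((j:ℝ)+2)*(2*π)) := by
    have h1 := hseg j
    have h2 := hseg (j+1)
    push_cast at h1 h2
    exact h1.trans (by convert h2 using 2; ring)
  apply hbig.mono_set'
  rw [Set.uIoc_of_le (by linarith), Set.uIoc_of_le (by nlinarith [hT])]
  exact Set.Ioc_subset_Ioc hja haj

lemma green_bound (u u' : ℝ → ℂ)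
    (hper : Function.Periodic u (2 * π))
    (hderiv : ∀ x : ℝ, HasDerivAt u (u' x) x)
    (hu' : IntervalIntegrable (fun x => ‖u' x‖ ^ 2) volume 0 (2 * π))
    (hmean : (∫ x in (0:ℝ)..(2 * π), u x) = 0)
    (l : ℝ) (hl : 0 < l) (x : ℝ) :
    ‖u x‖^2 ≤ (Real.cosh (l*π)/(2*l*Real.sinh (l*π)) - 1/(2*π*l^2)) *
      ((∫ y in (0:ℝ)..(2*π), ‖u' y‖^2) + l^2 * ∫ y in (0:ℝ)..(2*π), ‖u y‖^2) := by
  have hπ : (0:ℝ) < π := Real.pi_pos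
  have hT : (0:ℝ) < 2*π := by positivity
  have hsh : 0 < Real.sinh (l*π) := Real.sinh_pos_iff.mpr (by positivity)
  have hdiff : Differentiable ℝ u := fun y => (hderiv y).differentiableAt
  have hcont : Continuous u := hdiff.continuous
  have hu'per : Function.Periodic u' (2*π) := by
    intro y
    have h2 : HasDerivAt (fun z => u (z - 2*π)) (u' y) (y + 2*π) := by
      have h3 : HasDerivAt u (u' y) (y + 2*π - 2*π) := by simpa using hderiv y
      exact HasDerivAt.comp_sub_const (y + 2*π) (2*π) h3
    have heq : (fun z => u (z - 2*π)) = u := funext fun z => hper.sub_eq z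
    rw [heq] at h2
    exact (hderiv (y + 2*π)).unique h2
  have hu'meas : StronglyMeasurable u' := by
    have : u' = deriv u := funext fun y => ((hderiv y).deriv).symm
    rw [this]; exact stronglyMeasurable_deriv u
  have hsqper : Function.Periodic (fun y => ‖u' y‖^2) (2*π) := fun y => by simp [hu'per y]
  have hsq_ii : IntervalIntegrable (fun y => ‖u' y‖^2) volume x (x+2*π) := per_ii hsqper hu' x
  have hu'ii : IntervalIntegrable u' volume x (x+2*π) := by
    apply IntervalIntegrable.mono_fun' (g := fun y => 1 + ‖u' y‖^2)
      ((intervalIntegrable_const).add hsq_ii)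
      hu'meas.aestronglyMeasurable.restrict
    filter_upwards with y
    nlinarith [norm_nonneg (u' y), sq_nonneg (‖u' y‖ - 1)]
  -- Green's function data
  set D : ℝ := 2*l*Real.sinh (l*π) with hD
  have hD0 : 0 < D := by positivity
  set m : ℝ := 1/(2*π*l^2) with hm
  set Φ : ℝ → ℝ := fun z => Real.cosh (l*(π-(z-x))) / D with hΦdef
  set Ψ : ℝ → ℝ := fun z => (-l) * Real.sinh (l*(π-(z-x))) / D with hΨdef
  have hinner : ∀ y : ℝ, HasDerivAt (fun z => l*(π-(z-x))) (-l) y := by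
    intro y
    have h := (((hasDerivAt_id y).sub_const x).const_sub π).const_mul l
    refine h.congr_deriv ?_; ring
  have hΦd : ∀ y, HasDerivAt Φ (Ψ y) y := by
    intro y
    have h := ((Real.hasDerivAt_cosh (l*(π-(y-x)))).comp y (hinner y)).div_const D
    refine h.congr_deriv ?_
    simp [hΨdef]; ring
  have hΨd : ∀ y, HasDerivAt Ψ (l^2 * Φ y) y := by
    intro y
    have h := (((Real.hasDerivAt_sinh (l*(π-(y-x)))).comp y (hinner y)).const_mul (-l)).div_const D
    refine h.congr_deriv ?_
    simp [hΦdef]; ring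
  have hics : Continuous (fun z : ℝ => l*(π-(z-x))) :=
    continuous_const.mul (continuous_const.sub (continuous_id.sub continuous_const))
  have hΦc : Continuous Φ := (Real.continuous_cosh.comp hics).div_const _
  have hΨc : Continuous Ψ := (continuous_const.mul (Real.continuous_sinh.comp hics)).div_const _
  -- integration by parts
  have hvd : ∀ y ∈ Set.uIcc x (x+2*π), HasDerivAt (fun z => ((Ψ z : ℝ) : ℂ)) ((( l^2 * Φ y : ℝ)):ℂ) y :=
    fun y _ => (hΨd y).ofReal_comp
  have hv'ii : IntervalIntegrable (fun y => ((l^2 * Φ y : ℝ):ℂ)) volume x (x+2*π) := by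
    apply Continuous.intervalIntegrable
    exact Complex.continuous_ofReal.comp (continuous_const.mul hΦc)
  have hparts := intervalIntegral.integral_deriv_mul_eq_sub
    (fun y _ => hderiv y) hvd hu'ii hv'ii
  -- evaluate boundary terms
  have hΨx : Ψ x = -(1/2 : ℝ) := by
    simp only [hΨdef, sub_self, sub_zero, hD]
    field_simp
  have hΨx2 : Ψ (x + 2*π) = (1/2 : ℝ) := by
    simp only [hΨdef, hD]
    have : l*(π-(x+2*π-x)) = -(l*π) := by ring
    rw [this, Real.sinh_neg]
    field_simp
  have hbdry : u (x+2*π) * ((Ψ (x+2*π):ℝ):ℂ) - u x * ((Ψ x:ℝ):ℂ) = u x := by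
    rw [hper x, hΨx, hΨx2]
    push_cast
    ring
  rw [hbdry] at hparts
  -- zero mean on shifted interval
  have hmean0 : (∫ y in x..x+2*π, u y) = 0 := by
    rw [hper.intervalIntegral_add_eq x 0]
    simpa using hmean
  -- the key representation
  set g : ℝ → ℂ := fun y => u' y * ((Ψ y : ℝ):ℂ) + ((l^2 : ℝ):ℂ) * (u y * ((Φ y - m : ℝ):ℂ)) with hgdef
  have hgii : IntervalIntegrable g volume x (x+2*π) := by
    apply IntervalIntegrable.add
    · exact hu'ii.mul_continuousOn (Complex.continuous_ofReal.comp hΨc).continuousOn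
    · apply Continuous.intervalIntegrable
      apply continuous_const.mul
      exact hcont.mul (Complex.continuous_ofReal.comp (hΦc.sub continuous_const))
  have hcuii : IntervalIntegrable (fun y => ((l^2*m : ℝ):ℂ) * u y) volume x (x+2*π) := by
    have hc : Continuous (fun y => ((l^2*m : ℝ):ℂ) * u y) := continuous_const.mul hcont
    exact hc.intervalIntegrable _ _
  have hkey : (∫ y in x..x+2*π, g y) = u x := by
    have hsplit : (fun y => u' y * ((Ψ y:ℝ):ℂ) + u y * ((l^2*Φ y:ℝ):ℂ)) =
        (fun y => g y + ((l^2*m : ℝ):ℂ) * u y) := by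
      funext y
      simp only [hgdef]
      push_cast
      ring
    rw [hsplit] at hparts
    rw [intervalIntegral.integral_add hgii hcuii, intervalIntegral.integral_const_mul,
      hmean0, mul_zero, add_zero] at hparts
    exact hparts
  -- setup P and Q
  set p : ℝ → ℝ := fun y => ‖u' y‖^2 + l^2*‖u y‖^2 with hpdef
  set q : ℝ → ℝ := fun y => (Ψ y)^2 + l^2*(Φ y - m)^2 with hqdef
  have hcu2 : Continuous (fun y => ‖u y‖^2) := (hcont.norm).pow 2
  have hpii : IntervalIntegrable p volume x (x+2*π) := by
    apply hsq_ii.add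
    exact (continuous_const.mul hcu2).intervalIntegrable _ _
  have hqcont : Continuous q :=
    (hΨc.pow 2).add (continuous_const.mul ((hΦc.sub continuous_const).pow 2))
  have hqii : IntervalIntegrable q volume x (x+2*π) := hqcont.intervalIntegrable _ _
  set P : ℝ := ∫ y in x..x+2*π, p y with hP
  set Q : ℝ := ∫ y in x..x+2*π, q y with hQ
  have hP0 : 0 ≤ P := by
    apply intervalIntegral.integral_nonneg (by linarith)
    intro y _
    positivity
  have hQ0 : 0 ≤ Q := by
    apply intervalIntegral.integral_nonneg (by linarith)
    intro y _
    positivity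
  -- Cauchy-Schwarz with parameter
  have hbound : ∀ ε : ℝ, 0 < ε → ‖u x‖ ≤ ε*P/2 + Q/(2*ε) := by
    intro ε hε
    have hr : ‖u x‖ ≤ ∫ y in x..x+2*π, ‖g y‖ := by
      rw [← hkey]
      exact intervalIntegral.norm_integral_le_integral_norm (by linarith)
    have hrhs_ii : IntervalIntegrable (fun y => (ε/2)*p y + (1/(2*ε))*q y) volume x (x+2*π) :=
      (hpii.const_mul _).add (hqii.const_mul _)
    have hmono : (∫ y in x..x+2*π, ‖g y‖) ≤ ∫ y in x..x+2*π, ((ε/2)*p y + (1/(2*ε))*q y) := by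
      apply intervalIntegral.integral_mono_on (by linarith) hgii.norm hrhs_ii
      intro y _
      have h1 : ‖g y‖ ≤ ‖u' y‖*|Ψ y| + (l*‖u y‖)*(l*|Φ y - m|) := by
        have hA : ‖u' y * ((Ψ y:ℝ):ℂ)‖ = ‖u' y‖ * |Ψ y| := by
          rw [norm_mul, Complex.norm_real, Real.norm_eq_abs]
        have hB : ‖((l^2 : ℝ):ℂ) * (u y * ((Φ y - m : ℝ):ℂ))‖ = (l*‖u y‖)*(l*|Φ y - m|) := by
          rw [norm_mul, norm_mul, Complex.norm_real, Complex.norm_real, Real.norm_eq_abs,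
            Real.norm_eq_abs, abs_of_nonneg (by positivity : (0:ℝ) ≤ l^2)]
          ring
        calc ‖g y‖ ≤ ‖u' y * ((Ψ y:ℝ):ℂ)‖ + ‖((l^2 : ℝ):ℂ) * (u y * ((Φ y - m : ℝ):ℂ))‖ :=
              norm_add_le _ _
          _ = ‖u' y‖*|Ψ y| + (l*‖u y‖)*(l*|Φ y - m|) := by rw [hA, hB]
      have h2 := ptwise_cs (‖u' y‖) (l*‖u y‖) (|Ψ y|) (l*|Φ y - m|) ε hε
      have h3 : (‖u' y‖)^2 + (l*‖u y‖)^2 = p y := by simp only [hpdef]; ring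
      have h4 : (|Ψ y|)^2 + (l*|Φ y - m|)^2 = q y := by
        have e1 : (|Ψ y|)^2 = (Ψ y)^2 := sq_abs _
        have e2 : (|Φ y - m|)^2 = (Φ y - m)^2 := sq_abs _
        simp only [hqdef]
        rw [mul_pow, e2, e1]
      calc ‖g y‖ ≤ ‖u' y‖*|Ψ y| + (l*‖u y‖)*(l*|Φ y - m|) := h1
        _ ≤ ε*((‖u' y‖)^2 + (l*‖u y‖)^2)/2 + ((|Ψ y|)^2 + (l*|Φ y - m|)^2)/(2*ε) := h2
        _ = (ε/2)*p y + (1/(2*ε))*q y := by rw [h3, h4]; ring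
    have hlin : (∫ y in x..x+2*π, ((ε/2)*p y + (1/(2*ε))*q y)) = ε*P/2 + Q/(2*ε) := by
      rw [intervalIntegral.integral_add (hpii.const_mul _) (hqii.const_mul _),
        intervalIntegral.integral_const_mul, intervalIntegral.integral_const_mul]
      ring
    linarith [hr, hmono, hlin.le, hlin.ge]
  have hsq : ‖u x‖^2 ≤ P*Q := eps_sq _ _ _ (norm_nonneg _) hP0 hQ0 hbound
  -- compute P
  have hPval : P = (∫ y in (0:ℝ)..(2*π), ‖u' y‖^2) + l^2 * ∫ y in (0:ℝ)..(2*π), ‖u y‖^2 := by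
    have huper2 : Function.Periodic (fun y : ℝ => ‖u y‖^2) (2*π) := fun y => by simp [hper y]
    have : P = (∫ y in x..x+2*π, ‖u' y‖^2) + l^2 * ∫ y in x..x+2*π, ‖u y‖^2 := by
      rw [hP, hpdef]
      rw [intervalIntegral.integral_add (g := fun y => l^2 * ‖u y‖^2) hsq_ii ((continuous_const.mul hcu2).intervalIntegrable _ _),
        intervalIntegral.integral_const_mul]
    rw [this, hsqper.intervalIntegral_add_eq x 0, huper2.intervalIntegral_add_eq x 0]
    norm_num
  -- compute Q
  have trig : ∀ a:ℝ, Real.cosh (2*a) = Real.cosh a^2 + Real.sinh a^2 := by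
    intro a
    have e1 := Real.cosh_two_mul a
    have e2 := Real.cosh_sq_sub_sinh_sq a
    linarith
  set W : ℝ → ℝ := fun z => (-l) * Real.sinh (2*(l*(π-(z-x)))) / (2*D^2)
      + 2*l*m*Real.sinh (l*(π-(z-x)))/D + l^2*m^2*z with hWdef
  have hWd : ∀ y ∈ Set.uIcc x (x+2*π), HasDerivAt W (q y) y := by
    intro y _
    have hin2 : HasDerivAt (fun z => 2*(l*(π-(z-x)))) (2*(-l)) y := (hinner y).const_mul 2
    have ht1 : HasDerivAt (fun z => (-l) * Real.sinh (2*(l*(π-(z-x)))) / (2*D^2))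
        ((-l) * (Real.cosh (2*(l*(π-(y-x)))) * (2*(-l))) / (2*D^2)) y :=
      (((Real.hasDerivAt_sinh _).comp y hin2).const_mul (-l)).div_const _
    have ht2 : HasDerivAt (fun z => 2*l*m*Real.sinh (l*(π-(z-x)))/D)
        (2*l*m*(Real.cosh (l*(π-(y-x))) * (-l))/D) y :=
      (((Real.hasDerivAt_sinh _).comp y (hinner y)).const_mul (2*l*m)).div_const _
    have ht3 : HasDerivAt (fun z => l^2*m^2*z) (l^2*m^2) y := by
      simpa using (hasDerivAt_id y).const_mul (l^2*m^2)
    have := (ht1.add ht2).add ht3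
    refine this.congr_deriv ?_
    simp only [hqdef, hΨdef, hΦdef]
    rw [trig (l*(π-(y-x)))]
    field_simp
    ring
  have hQval : Q = Real.cosh (l*π)/(2*l*Real.sinh (l*π)) - 1/(2*π*l^2) := by
    have := intervalIntegral.integral_eq_sub_of_hasDerivAt hWd (hqcont.intervalIntegrable _ _)
    rw [hQ, this]
    simp only [hWdef]
    have e3 : 2*(l*(π-(x+2*π-x))) = -(2*(l*π)) := by ring
    have e4 : l*(π-(x+2*π-x)) = -(l*π) := by ring
    have e5 : l*(π-(x-x)) = l*π := by ring
    have e6 : 2*(l*(π-(x-x))) = 2*(l*π) := by ring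
    rw [e3, e6, e4, e5, Real.sinh_neg, Real.sinh_neg, Real.sinh_two_mul]
    rw [hD, hm]
    field_simp
    ring
  calc ‖u x‖^2 ≤ P*Q := hsq
    _ = (Real.cosh (l*π)/(2*l*Real.sinh (l*π)) - 1/(2*π*l^2)) *
      ((∫ y in (0:ℝ)..(2*π), ‖u' y‖^2) + l^2 * ∫ y in (0:ℝ)..(2*π), ‖u y‖^2) := by
        rw [hPval, hQval]; ring


set_option maxHeartbeats 2000000 in
/-- First-order interpolation inequality with sharp correction term for
2π-periodic functions with zero mean:
`‖u‖_∞² ≤ ‖u‖·‖u'‖ − (1/π)·‖u‖²`. -/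
theorem first_order_interpolation_with_correction
    (u u' : ℝ → ℂ)
    (hper : Function.Periodic u (2 * π))
    (hderiv : ∀ x : ℝ, HasDerivAt u (u' x) x)
    (hu' : IntervalIntegrable (fun x => ‖u' x‖ ^ 2) volume 0 (2 * π))
    (hmean : (∫ x in (0:ℝ)..(2 * π), u x) = 0) :
    ∀ x : ℝ, ‖u x‖ ^ 2 ≤
      Real.sqrt (∫ x in (0:ℝ)..(2 * π), ‖u x‖ ^ 2) *
        Real.sqrt (∫ x in (0:ℝ)..(2 * π), ‖u' x‖ ^ 2) -
      (1 / π) * ∫ x in (0:ℝ)..(2 * π), ‖u x‖ ^ 2 := by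
  intro x
  have hπ : (0:ℝ) < π := Real.pi_pos
  have hT : (0:ℝ) < 2*π := by positivity
  have hdiff : Differentiable ℝ u := fun y => (hderiv y).differentiableAt
  have hcont : Continuous u := hdiff.continuous
  have hcu2 : Continuous (fun y => ‖u y‖^2) := (hcont.norm).pow 2
  set A : ℝ := ∫ y in (0:ℝ)..(2*π), ‖u y‖^2 with hA
  set B : ℝ := ∫ y in (0:ℝ)..(2*π), ‖u' y‖^2 with hB
  have hgoal_eq : (∫ x in (0:ℝ)..(2 * π), ‖u x‖ ^ 2) = A := rfl
  have hA0 : 0 ≤ A := by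
    apply intervalIntegral.integral_nonneg (by linarith)
    intro y _; positivity
  have hB0 : 0 ≤ B := by
    apply intervalIntegral.integral_nonneg (by linarith)
    intro y _; positivity
  rcases eq_or_lt_of_le hA0 with hA0' | hApos
  · -- A = 0 : u vanishes identically
    have hiint : ∀ a b : ℝ, IntervalIntegrable (fun y => ‖u y‖^2) volume a b :=
      fun a b => hcu2.intervalIntegrable a b
    have hFz : ∀ y ∈ Set.Icc 0 (2*π), (∫ s in (0:ℝ)..y, ‖u s‖^2) = 0 := by
      intro y hy
      have h1 : (∫ s in (0:ℝ)..y, ‖u s‖^2) ≤ A := by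
        have := intervalIntegral.integral_add_adjacent_intervals (hiint 0 y) (hiint y (2*π))
        have h2 : 0 ≤ ∫ s in y..(2*π), ‖u s‖^2 := by
          apply intervalIntegral.integral_nonneg hy.2
          intro s _; positivity
        rw [hA]; rw [← this]; linarith
      have h3 : 0 ≤ ∫ s in (0:ℝ)..y, ‖u s‖^2 := by
        apply intervalIntegral.integral_nonneg hy.1
        intro s _; positivity
      linarith [hA0'.symm ▸ h1]
    have hIoo : ∀ y ∈ Set.Ioo (0:ℝ) (2*π), u y = 0 := by
      intro y hy
      have hd : HasDerivAt (fun w => ∫ s in (0:ℝ)..w, ‖u s‖^2) (‖u y‖^2) y := by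
        exact (hcu2.integral_hasStrictDerivAt 0 y).hasDerivAt
      have hev : (fun w => ∫ s in (0:ℝ)..w, ‖u s‖^2) =ᶠ[nhds y] (fun _ => (0:ℝ)) := by
        filter_upwards [Ioo_mem_nhds hy.1 hy.2] with w hw
        exact hFz w (Set.mem_Icc_of_Ioo hw)
      have hd0 : HasDerivAt (fun w => ∫ s in (0:ℝ)..w, ‖u s‖^2) 0 y :=
        (hasDerivAt_const y (0:ℝ)).congr_of_eventuallyEq hev
      have := hd.unique hd0
      have : ‖u y‖ = 0 := by
        have h4 : ‖u y‖^2 = 0 := this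
        nlinarith [norm_nonneg (u y)]
      simpa using this
    have hIcc : ∀ y ∈ Set.Icc (0:ℝ) (2*π), u y = 0 := by
      have hclosed : IsClosed (u ⁻¹' {0}) := isClosed_singleton.preimage hcont
      have hsub : Set.Ioo (0:ℝ) (2*π) ⊆ u ⁻¹' {0} := fun y hy => hIoo y hy
      intro y hy
      have hcl : closure (Set.Ioo (0:ℝ) (2*π)) = Set.Icc 0 (2*π) := closure_Ioo (by linarith)
      have : Set.Icc (0:ℝ) (2*π) ⊆ u ⁻¹' {0} := by
        rw [← hcl]
        exact closure_minimal hsub hclosed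
      exact this hy
    have hux : u x = 0 := by
      set k : ℤ := ⌊x / (2*π)⌋ with hk
      have h1 : (k:ℝ) ≤ x/(2*π) := Int.floor_le _
      have h2 : x/(2*π) < k + 1 := Int.lt_floor_add_one _
      have hx1 : 0 ≤ x - k*(2*π) := by nlinarith [(le_div_iff₀ hT).mp h1]
      have hx2 : x - k*(2*π) ≤ 2*π := by nlinarith [(div_lt_iff₀ hT).mp h2]
      have := (hper.zsmul k) (x - k*(2*π))
      rw [zsmul_eq_mul] at this
      have hxv : x - k*(2*π) + k*(2*π) = x := by ring
      rw [hxv] at this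
      rw [this]
      exact hIcc _ ⟨hx1, hx2⟩
    rw [hux]
    rw [← hA0']
    simp
  · -- A > 0
    -- step 1: Wirtinger substitute A ≤ 4.5 B
    have hg1 := green_bound u u' hper hderiv hu' hmean (1/π) (by positivity)
    have hl1 : (1/π)*π = 1 := by field_simp
    rw [hl1] at hg1
    have hsh1 : 0 < Real.sinh 1 := Real.sinh_pos_iff.mpr one_pos
    have hch1 : 0 < Real.cosh 1 := by positivity
    have hAbound : A ≤ 2*π * ((Real.cosh 1/(2*(1/π)*Real.sinh 1) - 1/(2*π*(1/π)^2)) * (B + (1/π)^2 * A)) := by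
      have hmono := intervalIntegral.integral_mono_on hT.le (hcu2.intervalIntegrable 0 (2*π))
        (intervalIntegrable_const (μ := volume)) (fun y _ => hg1 y)
      rw [intervalIntegral.integral_const] at hmono
      simpa [smul_eq_mul] using hmono
    have hE1 : (2.7182818283 : ℝ) < Real.exp 1 := Real.exp_one_gt_d9
    have hE2 : Real.exp 1 < 2.7182818286 := Real.exp_one_lt_d9
    have hEpos : (0:ℝ) < Real.exp 1 := Real.exp_pos 1
    have hEinv : Real.exp (-1) = (Real.exp 1)⁻¹ := Real.exp_neg 1
    have hEi1 : (0.3678:ℝ) < Real.exp (-1) := by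
      rw [hEinv]
      rw [lt_inv_comm₀ (by norm_num) hEpos]
      calc Real.exp 1 < 2.7182818286 := hE2
        _ < 0.3678⁻¹ := by norm_num
    have hEi2 : Real.exp (-1) < 0.3679 := by
      rw [hEinv]
      rw [inv_lt_comm₀ hEpos (by norm_num)]
      calc (0.3679:ℝ)⁻¹ < 2.7182818283 := by norm_num
        _ < Real.exp 1 := hE1
    have hsinh1 : Real.sinh 1 = (Real.exp 1 - Real.exp (-1))/2 := Real.sinh_eq 1
    have hcosh1 : Real.cosh 1 = (Real.exp 1 + Real.exp (-1))/2 := Real.cosh_eq 1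
    have hπu : π < 3.1416 := by linarith [Real.pi_lt_d6]
    have hπl : (3.1415:ℝ) < π := by linarith [Real.pi_gt_d6]
    have hK : A ≤ 4.5 * B := by
      -- clean up hAbound
      have hc1 : (Real.cosh 1/(2*(1/π)*Real.sinh 1) - 1/(2*π*(1/π)^2)) =
          (π/2) * (Real.cosh 1 - Real.sinh 1)/Real.sinh 1 := by
        field_simp
      rw [hc1] at hAbound
      have h5 : A * Real.sinh 1 ≤ π^2*(Real.cosh 1 - Real.sinh 1)*B + (Real.cosh 1 - Real.sinh 1)*A := by
        have h6 : 2*π*((π/2) * (Real.cosh 1 - Real.sinh 1)/Real.sinh 1 * (B + (1/π)^2*A)) * Real.sinh 1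
            = π^2*(Real.cosh 1 - Real.sinh 1)*B + (Real.cosh 1 - Real.sinh 1)*A := by
          field_simp
        calc A * Real.sinh 1 ≤ 2*π*((π/2) * (Real.cosh 1 - Real.sinh 1)/Real.sinh 1 * (B + (1/π)^2*A)) * Real.sinh 1 := by
              apply mul_le_mul_of_nonneg_right hAbound hsh1.le
          _ = _ := h6
      have hcs : Real.cosh 1 - Real.sinh 1 = Real.exp (-1) := Real.cosh_sub_sinh 1
      rw [hcs] at h5
      have hπsq : π^2 < 9.8697 := by nlinarith [hπu, hπl]
      have hsl : 1.1751 < Real.sinh 1 := by rw [hsinh1]; linarith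
      have h8 : π^2*Real.exp (-1) ≤ 3.6313 := by
        have h9 : π^2 * Real.exp (-1) < 9.8697 * 0.3679 :=
          mul_lt_mul'' hπsq hEi2 (by positivity) (by positivity)
        norm_num at h9
        linarith
      have h7 : π^2*Real.exp (-1)*B ≤ 3.6313*B := mul_le_mul_of_nonneg_right h8 hB0
      have h10 : A * 0.8072 ≤ A * (Real.sinh 1 - Real.exp (-1)) :=
        mul_le_mul_of_nonneg_left (by linarith) hA0
      have h11 : A * (Real.sinh 1 - Real.exp (-1)) ≤ 3.6313*B := by nlinarith [h5, h7]
      nlinarith [h10, h11, hB0]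
    -- main optimization step
    have hBpos : 0 < B := by nlinarith [hK, hApos]
    set t : ℝ := π * Real.sqrt (B/A) - 1 with htdef
    have hsBA : Real.sqrt (B/A) = (t+1)/π := by rw [htdef]; field_simp; ring
    have hBA0 : 0 ≤ B/A := by positivity
    have hs47 : 0.47 ≤ Real.sqrt (B/A) := by
      have h1 : (0.2209:ℝ) ≤ B/A := by
        rw [le_div_iff₀ hApos]
        nlinarith [hK, hBpos]
      calc (0.47:ℝ) = Real.sqrt 0.2209 := by
            rw [show (0.2209:ℝ) = 0.47^2 by norm_num, Real.sqrt_sq (by norm_num)]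
        _ ≤ Real.sqrt (B/A) := Real.sqrt_le_sqrt h1
    have ht3 : 1/3 ≤ t := by
      have h2 : (3.1415:ℝ)*0.47 ≤ π * Real.sqrt (B/A) :=
        mul_le_mul hπl.le hs47 (by norm_num) (by positivity)
      rw [htdef]
      norm_num at h2 ⊢
      linarith
    have ht0 : 0 < t := lt_of_lt_of_le (by norm_num) ht3
    set l : ℝ := t/π with hldef
    have hl0 : 0 < l := by positivity
    have hlπ : l*π = t := by rw [hldef]; field_simp
    have hg := green_bound u u' hper hderiv hu' hmean l hl0 x
    rw [hlπ] at hg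
    have hsq' : B/A = ((t+1)/π)^2 := by
      rw [← hsBA]
      exact (Real.sq_sqrt hBA0).symm
    have hBeq : B = ((t+1)/π)^2 * A := by
      rw [← hsq']; field_simp
    have hsqrtB : Real.sqrt B = ((t+1)/π) * Real.sqrt A := by
      rw [hBeq, Real.sqrt_mul (by positivity), Real.sqrt_sq (by positivity)]
    have hprod : Real.sqrt A * Real.sqrt B = ((t+1)/π) * A := by
      rw [hsqrtB]
      linear_combination ((t+1)/π) * (Real.mul_self_sqrt hA0)
    have hsht : 0 < Real.sinh t := Real.sinh_pos_iff.mpr ht0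
    have hcore := core_hyp t ht3
    have hS : (Real.cosh t/(2*l*Real.sinh t) - 1/(2*π*l^2)) * (((t+1)/π)^2 + l^2) ≤ t/π := by
      rw [hldef]
      have hrw : (Real.cosh t/(2*(t/π)*Real.sinh t) - 1/(2*π*(t/π)^2)) * (((t+1)/π)^2 + (t/π)^2)
          = ((t*Real.cosh t - Real.sinh t) * (2*t^2+2*t+1)) / (2*π*t^2*Real.sinh t) := by
        field_simp
        ring
      rw [hrw, div_le_div_iff₀ (by positivity) hπ]
      nlinarith [mul_le_mul_of_nonneg_right hcore hπ.le]
    have hcomb : (Real.cosh t/(2*l*Real.sinh t) - 1/(2*π*l^2)) * (B + l^2*A) ≤ (t/π)*A := by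
      have he : (Real.cosh t/(2*l*Real.sinh t) - 1/(2*π*l^2)) * (B + l^2*A)
          = ((Real.cosh t/(2*l*Real.sinh t) - 1/(2*π*l^2)) * (((t+1)/π)^2 + l^2)) * A := by
        rw [hBeq]; ring
      rw [he]
      exact mul_le_mul_of_nonneg_right hS hA0
    calc ‖u x‖^2 ≤ (Real.cosh t/(2*l*Real.sinh t) - 1/(2*π*l^2)) * (B + l^2*A) := hg
      _ ≤ (t/π)*A := hcomb
      _ = Real.sqrt A * Real.sqrt B - (1/π)*A := by rw [hprod]; ring
end

section
/- Let (a_k)_{k≥1} be a sequence of nonnegative real numbers, not all zero, with Σ_{k=1}^∞ k² a_k² < ∞. Then (Σ_{k=1}^∞ a_k)² ≤ π·(Σ_{k=1}^∞ a_k²)^{1/2}·(Σ_{k=1}^∞ k² a_k²)^{1/2} − Σ_{k=1}^∞ a_k². -/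
/-!
By Cauchy–Schwarz, `(∑ aₖ)² ≤ (∑ rₖ) (∑ aₖ² / rₖ)` for any positive weights `rₖ`. Take
`rₖ = (arctan ((k + 3/2) / x) - arctan ((k + 1/2) / x)) / x` for a parameter `x > 0`: the series
telescopes to `(π/2 - arctan (1/(2x))) / x`, and by the subtraction formula
`rₖ = arctan (x / Dₖ) / x` with `Dₖ = x² + (k+1)² - 1/4`. The Padé bound
`arctan y ≥ 3y / (3 + y²)` then gives `1/rₖ ≤ Dₖ + x²/(3Dₖ) ≤ (k+1)² + c(x)` with
`c(x) = x² - 1/4 + x²/(3(x² + 3/4))`, and also `∑ rₖ ≤ π/(2x) - 6/(12x² + 1)`. Hence, with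
`S = ∑ aₖ²` and `T = ∑ (k+1)² aₖ²`,
`(∑ aₖ)² ≤ (π/(2x) - 6/(12x² + 1)) (c(x) S + T)` for every `x > 0`.
For `s = √(T/S) ≥ 1` and `x = s - 2/5` the right-hand side is at most `(π s - 1) S`, an elementary
inequality in `s` that only needs `π < 3.1416`.
-/

open Real Filter Topology

namespace Real

theorem arctan_sub_arctan {x y : ℝ} (h : -1 < x * y) :
    arctan y - arctan x = arctan ((y - x) / (1 + x * y)) := by
  rw [sub_eq_add_neg, ← arctan_neg, arctan_add (by linarith)]
  congr 2; ring

theorem three_mul_div_le_arctan {y : ℝ} (hy : 0 ≤ y) : 3 * y / (3 + y ^ 2) ≤ arctan y := by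
  let g : ℝ → ℝ := fun t => arctan t - 3 * t / (3 + t ^ 2)
  have hg : ∀ z, HasDerivAt g (4 * z ^ 4 / ((1 + z ^ 2) * (3 + z ^ 2) ^ 2)) z := fun z => by
    refine ((hasDerivAt_arctan z).sub (((hasDerivAt_id' z).const_mul 3).div
      ((hasDerivAt_pow 2 z).const_add 3) (by positivity))).congr_deriv ?_
    field_simp
    ring
  have hmono : Monotone g := monotone_of_deriv_nonneg (fun z => (hg z).differentiableAt)
    fun z => (hg z).deriv ▸ by positivity
  simpa [g] using hmono hy

end Real

theorem sq_tsum_le_mul_tsum_sq_div {ι : Type*} {a r : ι → ℝ} {R : ℝ} (ha : 0 ≤ a)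
    (hr : ∀ i, 0 < r i) (hR : HasSum r R) (hq : Summable fun i => a i ^ 2 / r i) :
    (∑' i, a i) ^ 2 ≤ R * ∑' i, a i ^ 2 / r i := by
  have hq0 : ∀ i, 0 ≤ a i ^ 2 / r i := fun i => div_nonneg (sq_nonneg _) (hr i).le
  have hfin : ∀ u : Finset ι, ∑ i ∈ u, a i ≤ √(R * ∑' i, a i ^ 2 / r i) := fun u => by
    refine Real.le_sqrt_of_sq_le ?_
    calc (∑ i ∈ u, a i) ^ 2 ≤ (∑ i ∈ u, r i) * ∑ i ∈ u, a i ^ 2 / r i :=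
          Finset.sum_sq_le_sum_mul_sum_of_sq_le_mul u (fun i _ => (hr i).le) (fun i _ => hq0 i)
            fun i _ => (mul_div_cancel₀ _ (hr i).ne').ge
      _ ≤ R * ∑' i, a i ^ 2 / r i :=
          mul_le_mul (sum_le_hasSum u (fun i _ => (hr i).le) hR) (hq.sum_le_tsum u fun i _ => hq0 i)
            (Finset.sum_nonneg fun i _ => hq0 i) (hR.nonneg fun i => (hr i).le)
  calc (∑' i, a i) ^ 2 ≤ √(R * ∑' i, a i ^ 2 / r i) ^ 2 :=
        pow_le_pow_left₀ (tsum_nonneg ha) (Real.tsum_le_of_sum_le ha hfin) 2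
    _ = R * ∑' i, a i ^ 2 / r i :=
        Real.sq_sqrt (mul_nonneg (hR.nonneg fun i => (hr i).le) (tsum_nonneg hq0))

noncomputable def carlsonWeight (x : ℝ) (k : ℕ) : ℝ :=
  (arctan ((k + 3 / 2) / x) - arctan ((k + 1 / 2) / x)) / x

noncomputable def carlsonOffset (x : ℝ) : ℝ :=
  x ^ 2 - 1 / 4 + x ^ 2 / (3 * (x ^ 2 + 3 / 4))

section CarlsonWeight

variable {x : ℝ}

theorem hasSum_carlsonWeight (hx : 0 < x) :
    HasSum (carlsonWeight x) ((π / 2 - arctan (1 / (2 * x))) / x) := by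
  let θ : ℕ → ℝ := fun n => arctan ((n + 1 / 2) / x)
  have hθ : Tendsto θ atTop (𝓝 (π / 2)) :=
    tendsto_nhds_of_tendsto_nhdsWithin tendsto_arctan_atTop |>.comp <|
      (tendsto_atTop_add_const_right _ _ tendsto_natCast_atTop_atTop).atTop_div_const hx
  have hstep : ∀ k, 0 ≤ θ (k + 1) - θ k := fun k =>
    sub_nonneg.2 <| arctan_strictMono.monotone <| by gcongr; simp
  have hsum : HasSum (fun k => θ (k + 1) - θ k) (π / 2 - θ 0) := by
    refine (hasSum_iff_tendsto_nat_of_nonneg hstep _).2 ?_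
    simp_rw [Finset.sum_range_sub]
    exact hθ.sub_const _
  have hθ0 : θ 0 = arctan (1 / (2 * x)) := by simp only [θ, Nat.cast_zero, zero_add, div_div]
  have hweight : carlsonWeight x = fun k => (θ (k + 1) - θ k) / x := by
    ext k
    simp only [carlsonWeight, θ, Nat.cast_succ]
    ring_nf
  rw [hweight, ← hθ0]
  exact hsum.div_const x

theorem carlsonWeight_eq (hx : 0 < x) (k : ℕ) :
    carlsonWeight x k = arctan (x / (x ^ 2 + (k + 1) ^ 2 - 1 / 4)) / x := by
  have hD : 0 < x ^ 2 + (k + 1) ^ 2 - 1 / 4 := by nlinarith [(Nat.cast_nonneg k : (0 : ℝ) ≤ k)]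
  rw [carlsonWeight, arctan_sub_arctan (neg_one_lt_zero.trans (by positivity))]
  congr 2
  rw [eq_div_iff hD.ne']
  field_simp
  ring

theorem carlsonWeight_pos (hx : 0 < x) (k : ℕ) : 0 < carlsonWeight x k :=
  div_pos (sub_pos.2 <| arctan_strictMono <| by gcongr; norm_num) hx

theorem inv_carlsonWeight_le (hx : 0 < x) (k : ℕ) :
    (carlsonWeight x k)⁻¹ ≤ carlsonOffset x + (k + 1) ^ 2 := by
  set D : ℝ := x ^ 2 + (k + 1) ^ 2 - 1 / 4
  have hD : x ^ 2 + 3 / 4 ≤ D := by simp only [D]; nlinarith [(Nat.cast_nonneg k : (0 : ℝ) ≤ k)]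
  have hD0 : 0 < D := by linarith [sq_nonneg x]
  have hpade : (D + x ^ 2 / (3 * D))⁻¹ ≤ carlsonWeight x k := by
    rw [carlsonWeight_eq hx]
    calc (D + x ^ 2 / (3 * D))⁻¹ = 3 * (x / D) / (3 + (x / D) ^ 2) / x := by field_simp
      _ ≤ _ := by gcongr; exact three_mul_div_le_arctan (by positivity)
  calc (carlsonWeight x k)⁻¹ ≤ D + x ^ 2 / (3 * D) :=
        (inv_le_comm₀ (carlsonWeight_pos hx k) (by positivity)).2 hpade
    _ ≤ D + x ^ 2 / (3 * (x ^ 2 + 3 / 4)) := by gcongr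
    _ = carlsonOffset x + (k + 1) ^ 2 := by simp only [carlsonOffset, D]; ring

theorem tsum_carlsonWeight_le (hx : 0 < x) :
    (π / 2 - arctan (1 / (2 * x))) / x ≤ π / (2 * x) - 6 / (12 * x ^ 2 + 1) := by
  have hpade := three_mul_div_le_arctan (y := 1 / (2 * x)) (by positivity)
  calc (π / 2 - arctan (1 / (2 * x))) / x
      ≤ (π / 2 - 3 * (1 / (2 * x)) / (3 + (1 / (2 * x)) ^ 2)) / x := by gcongr
    _ = π / (2 * x) - 6 / (12 * x ^ 2 + 1) := by field_simp; ring

theorem sq_tsum_le_of_carlsonWeight {a : ℕ → ℝ} (ha : ∀ k, 0 ≤ a k)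
    (hS : Summable fun k => a k ^ 2) (hT : Summable fun k : ℕ => ((k : ℝ) + 1) ^ 2 * a k ^ 2)
    (hx : 0 < x) :
    (∑' k, a k) ^ 2 ≤ (π / (2 * x) - 6 / (12 * x ^ 2 + 1)) *
      ∑' k : ℕ, (carlsonOffset x + (k + 1) ^ 2) * a k ^ 2 := by
  have hle : ∀ k, a k ^ 2 / carlsonWeight x k ≤ (carlsonOffset x + (k + 1) ^ 2) * a k ^ 2 :=
    fun k => by
      rw [div_eq_mul_inv, mul_comm]
      exact mul_le_mul_of_nonneg_right (inv_carlsonWeight_le hx k) (sq_nonneg _)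
  have hq0 : ∀ k, 0 ≤ a k ^ 2 / carlsonWeight x k :=
    fun k => div_nonneg (sq_nonneg _) (carlsonWeight_pos hx k).le
  have hw : Summable fun k : ℕ => (carlsonOffset x + (k + 1) ^ 2) * a k ^ 2 :=
    ((hS.mul_left (carlsonOffset x)).add hT).congr fun k => by ring
  have hq : Summable fun k => a k ^ 2 / carlsonWeight x k := hw.of_nonneg_of_le hq0 hle
  calc (∑' k, a k) ^ 2 ≤ (π / 2 - arctan (1 / (2 * x))) / x * ∑' k, a k ^ 2 / carlsonWeight x k :=
        sq_tsum_le_mul_tsum_sq_div ha (carlsonWeight_pos hx) (hasSum_carlsonWeight hx) hq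
    _ ≤ (π / 2 - arctan (1 / (2 * x))) / x * ∑' k : ℕ, (carlsonOffset x + (k + 1) ^ 2) * a k ^ 2 :=
        mul_le_mul_of_nonneg_left (hq.tsum_le_tsum hle hw)
          ((hasSum_carlsonWeight hx).nonneg fun k => (carlsonWeight_pos hx k).le)
    _ ≤ _ :=
        mul_le_mul_of_nonneg_right (tsum_carlsonWeight_le hx)
          ((tsum_nonneg hq0).trans (hq.tsum_le_tsum hle hw))

end CarlsonWeight

theorem carlson_scalar_bound {s : ℝ} (hs : 1 ≤ s) :
    (π / (2 * (s - 2 / 5)) - 6 / (12 * (s - 2 / 5) ^ 2 + 1)) * (carlsonOffset (s - 2 / 5) + s ^ 2)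
      ≤ π * s - 1 := by
  obtain ⟨t, ht, rfl⟩ : ∃ t, 0 ≤ t ∧ s = t + 1 := ⟨s - 1, by linarith, by ring⟩
  rw [show t + 1 - 2 / 5 = t + 3 / 5 by ring]
  set M := carlsonOffset (t + 3 / 5) + (t + 1) ^ 2
  have hgap : 0 ≤ M / (2 * (t + 3 / 5)) - (t + 1) := by
    simp only [M, carlsonOffset]
    field_simp
    ring_nf
    positivity
  have hpoly : 3.1416 * (M / (2 * (t + 3 / 5)) - (t + 1)) ≤
      6 * M / (12 * (t + 3 / 5) ^ 2 + 1) - 1 := by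
    simp only [M, carlsonOffset]
    rw [← sub_nonneg]
    field_simp
    ring_nf
    positivity
  calc _ = π * (M / (2 * (t + 3 / 5)) - (t + 1)) + π * (t + 1)
        - 6 * M / (12 * (t + 3 / 5) ^ 2 + 1) := by ring
    _ ≤ 3.1416 * (M / (2 * (t + 3 / 5)) - (t + 1)) + π * (t + 1)
        - 6 * M / (12 * (t + 3 / 5) ^ 2 + 1) := by gcongr; exact pi_lt_d4.le
    _ ≤ π * (t + 1) - 1 := by linarith

theorem le_natCast_add_one_sq_mul (k : ℕ) {b : ℝ} (hb : 0 ≤ b) : b ≤ ((k : ℝ) + 1) ^ 2 * b :=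
  le_mul_of_one_le_left hb (one_le_pow₀ (le_add_of_nonneg_left k.cast_nonneg))

theorem sq_tsum_le_of_hasSum {a : ℕ → ℝ} (ha : ∀ k, 0 ≤ a k) {S T : ℝ}
    (hS : HasSum (fun k => a k ^ 2) S) (hT : HasSum (fun k : ℕ => ((k : ℝ) + 1) ^ 2 * a k ^ 2) T)
    (hS0 : 0 < S) :
    (∑' k, a k) ^ 2 ≤ π * √S * √T - S := by
  have hST : S ≤ T := hasSum_le (fun k => le_natCast_add_one_sq_mul k (sq_nonneg _)) hS hT
  set s := √T / √S
  have hs : 1 ≤ s := (one_le_div (sqrt_pos.2 hS0)).2 (sqrt_le_sqrt hST)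
  have hTs : T = s ^ 2 * S := by
    rw [div_pow, sq_sqrt (hS0.le.trans hST), sq_sqrt hS0.le]
    field_simp
  have hsS : s * S = √S * √T := by
    have hS0' : √S ≠ 0 := (sqrt_pos.2 hS0).ne'
    calc s * S = √T / √S * (√S * √S) := by rw [mul_self_sqrt hS0.le]
      _ = √S * √T := by field_simp
  have hweighted : HasSum (fun k : ℕ => (carlsonOffset (s - 2 / 5) + (k + 1) ^ 2) * a k ^ 2)
      ((carlsonOffset (s - 2 / 5) + s ^ 2) * S) := by
    have h := (hS.mul_left (carlsonOffset (s - 2 / 5))).add hT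
    simp only [← add_mul] at h
    rwa [hTs, ← add_mul] at h
  calc (∑' k, a k) ^ 2 ≤ (π / (2 * (s - 2 / 5)) - 6 / (12 * (s - 2 / 5) ^ 2 + 1)) *
        ((carlsonOffset (s - 2 / 5) + s ^ 2) * S) :=
        hweighted.tsum_eq ▸ sq_tsum_le_of_carlsonWeight ha hS.summable hT.summable (by linarith)
    _ ≤ (π * s - 1) * S := by
        rw [← mul_assoc]
        exact mul_le_mul_of_nonneg_right (carlson_scalar_bound hs) hS0.le
    _ = π * √S * √T - S := by linear_combination π * hsS

/-- Carlson's inequality with sharp negative correction term: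
`(Σ_{k≥1} a_k)² ≤ π (Σ a_k²)^{1/2} (Σ k² a_k²)^{1/2} − Σ a_k²`.
The sequence is indexed by `k : ℕ`, where `a k` represents `a_{k+1}`. -/
theorem carlson_inequality_with_correction
    (a : ℕ → ℝ) (ha : ∀ k, 0 ≤ a k) (hne : a ≠ 0)
    (hsum : Summable (fun k : ℕ => ((k : ℝ) + 1) ^ 2 * a k ^ 2)) :
    (∑' k : ℕ, a k) ^ 2 ≤
      π * Real.sqrt (∑' k : ℕ, a k ^ 2) *
        Real.sqrt (∑' k : ℕ, ((k : ℝ) + 1) ^ 2 * a k ^ 2) -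
      ∑' k : ℕ, a k ^ 2 := by
  have hsq : Summable fun k => a k ^ 2 :=
    hsum.of_nonneg_of_le (fun k => sq_nonneg _) fun k => le_natCast_add_one_sq_mul k (sq_nonneg _)
  obtain ⟨j, hj⟩ := Function.ne_iff.mp hne
  have hS0 : 0 < ∑' k, a k ^ 2 :=
    hsq.tsum_pos (fun _ => sq_nonneg _) j (pow_pos ((ha j).lt_of_ne' hj) 2)
  exact sq_tsum_le_of_hasSum ha hsq.hasSum hsum.hasSum hS0
end

section
/- Let (a_k)_{k≥1} be a sequence of nonnegative real numbers with Σ_{k=1}^∞ (k−1/2)² a_k² < ∞. Then (Σ_{k=1}^∞ a_k)² ≤ π·(Σ_{k=1}^∞ a_k²)^{1/2}·(Σ_{k=1}^∞ (k−1/2)² a_k²)^{1/2}. -/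
/-!
Weighted Cauchy–Schwarz with weights `w_k = (r² + (k + 1/2)²) / r` gives
`(Σ a_k)² ≤ (Σ r / (r² + (k + 1/2)²)) · (r A + B / r)` with `A = Σ a_k²`, `B = Σ (k + 1/2)² a_k²`.
The first factor is `(π/2) tanh (π r) < π/2`: it is the partial-fraction expansion of `π cot (π z)`
at `z = 1/2 + i r`, where `cot (π/2 + i π r) = -i tanh (π r)`. Taking `r = √(B/A)` makes
`r A + B / r = 2 √(A B)`.
-/

open Real Filter Topology Finset

lemma one_half_add_mul_I_mem_integerComplement (c : ℝ) :
    1 / 2 + c * Complex.I ∈ Complex.integerComplement := by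
  rintro ⟨n, hn⟩
  have hre : (n : ℝ) = 1 / 2 := by simpa using congrArg Complex.re hn
  have : 2 * n = 1 := by exact_mod_cast (by rw [hre]; norm_num : (2 * n : ℝ) = 1)
  omega

lemma pi_mul_cot_pi_mul_one_half_add_mul_I (c : ℝ) :
    π * Complex.cot (π * (1 / 2 + c * Complex.I)) = -(π * tanh (π * c) : ℝ) * Complex.I := by
  rw [Complex.cot_eq_cos_div_sin, mul_add, mul_one_div, add_comm, Complex.cos_add_pi_div_two,
    Complex.sin_add_pi_div_two, neg_div, ← Complex.tan_eq_sin_div_cos, ← mul_assoc,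
    ← Complex.ofReal_mul, Complex.tan_mul_I, ← Complex.ofReal_tanh]
  push_cast
  ring

lemma hasSum_div_sq_add_add_one_half_sq {c : ℝ} (hc : 0 ≤ c) :
    HasSum (fun k : ℕ => c / (c ^ 2 + ((k : ℝ) + 1 / 2) ^ 2)) (π / 2 * tanh (π * c)) := by
  have hx := one_half_add_mul_I_mem_integerComplement c
  set x : ℂ := 1 / 2 + c * Complex.I with hx_def
  have hshift : Tendsto (fun N : ℕ => 1 / (x + N)) atTop (𝓝 0) := by
    simpa only [one_div, Function.comp_def] using tendsto_inv₀_cobounded.comp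
      ((tendsto_const_add_cobounded x).comp tendsto_natCast_atTop_cobounded)
  -- Shifting the `1 / (x + (k + 1))` half of `cotTerm x k` by one index pairs `i c - (k + 1/2)`
  -- with `i c + (k + 1/2)`; the shift costs the telescoping term `1 / x - 1 / (x + N)`.
  have hterm (k : ℕ) : ((c / (c ^ 2 + ((k : ℝ) + 1 / 2) ^ 2) : ℝ) : ℂ) =
      Complex.I / 2 * (cotTerm x k + (1 / (x + k) - 1 / (x + (k + 1 : ℕ)))) := by
    have h1 : x - (k + 1) ≠ 0 := by
      simpa [sub_eq_add_neg] using Complex.integerComplement_add_ne_zero hx (-(k + 1))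
    have h2 : x + k ≠ 0 := by simpa using Complex.integerComplement_add_ne_zero hx k
    have h3 : ((c ^ 2 + ((k : ℝ) + 1 / 2) ^ 2 : ℝ) : ℂ) ≠ 0 := by
      exact_mod_cast (by positivity : c ^ 2 + ((k : ℝ) + 1 / 2) ^ 2 ≠ 0)
    have hsplit : cotTerm x k + (1 / (x + k) - 1 / (x + (k + 1 : ℕ))) =
        1 / (x - (k + 1)) + 1 / (x + k) := by
      simp only [cotTerm]
      push_cast
      ring
    rw [hsplit, div_add_div _ _ h1 h2, Complex.ofReal_div, mul_div_assoc',
      div_eq_div_iff h3 (mul_ne_zero h1 h2), hx_def]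
    push_cast
    ring_nf
    rw [Complex.I_sq]
    ring
  have hpartial (N : ℕ) :
      ((∑ k ∈ range N, c / (c ^ 2 + ((k : ℝ) + 1 / 2) ^ 2) : ℝ) : ℂ) =
        Complex.I / 2 * (∑ k ∈ range N, cotTerm x k + (1 / x - 1 / (x + N))) := by
    simp only [Complex.ofReal_sum, hterm, ← mul_sum, sum_add_distrib,
      sum_range_sub' (fun k => 1 / (x + k))]
    simp
  rw [hasSum_iff_tendsto_nat_of_nonneg (fun k => by positivity), ← tendsto_ofReal_iff]
  simp_rw [hpartial]
  convert ((tendsto_logDeriv_euler_cot_sub hx).add (tendsto_const_nhds.sub hshift)).const_mul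
    (Complex.I / 2) using 2
  rw [sub_zero, sub_add_cancel, pi_mul_cot_pi_mul_one_half_add_mul_I]
  push_cast
  linear_combination (π * Complex.tanh (π * c) / 2 : ℂ) * Complex.I_sq

lemma tsum_div_sq_add_add_one_half_sq_le {c : ℝ} (hc : 0 ≤ c) :
    ∑' k : ℕ, c / (c ^ 2 + ((k : ℝ) + 1 / 2) ^ 2) ≤ π / 2 := by
  rw [(hasSum_div_sq_add_add_one_half_sq hc).tsum_eq]
  exact mul_le_of_le_one_right (by positivity) (tanh_lt_one _).le

lemma sq_tsum_le_tsum_inv_mul_tsum_mul_sq {a w : ℕ → ℝ} (ha : ∀ k, 0 ≤ a k)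
    (hw : ∀ k, 0 < w k) (hinv : Summable fun k => (w k)⁻¹)
    (hwa : Summable fun k => w k * a k ^ 2) :
    (∑' k, a k) ^ 2 ≤ (∑' k, (w k)⁻¹) * ∑' k, w k * a k ^ 2 := by
  have hinv_nonneg (k : ℕ) : 0 ≤ (w k)⁻¹ := (inv_pos.2 (hw k)).le
  have hwa_nonneg (k : ℕ) : 0 ≤ w k * a k ^ 2 := by have := hw k; positivity
  have hpartial (n : ℕ) :
      ∑ k ∈ range n, a k ≤ √((∑' k, (w k)⁻¹) * ∑' k, w k * a k ^ 2) := by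
    refine le_sqrt_of_sq_le ?_
    calc (∑ k ∈ range n, a k) ^ 2
        ≤ (∑ k ∈ range n, (w k)⁻¹) * ∑ k ∈ range n, w k * a k ^ 2 :=
          sum_sq_le_sum_mul_sum_of_sq_le_mul _ (fun k _ => hinv_nonneg k)
            (fun k _ => hwa_nonneg k) (fun k _ => (inv_mul_cancel_left₀ (hw k).ne' _).ge)
      _ ≤ (∑' k, (w k)⁻¹) * ∑' k, w k * a k ^ 2 :=
          mul_le_mul (hinv.sum_le_tsum _ fun k _ => hinv_nonneg k)
            (hwa.sum_le_tsum _ fun k _ => hwa_nonneg k) (sum_nonneg fun k _ => hwa_nonneg k)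
            (tsum_nonneg hinv_nonneg)
  exact (le_sqrt (tsum_nonneg ha) (mul_nonneg (tsum_nonneg hinv_nonneg)
    (tsum_nonneg hwa_nonneg))).1 (Real.tsum_le_of_sum_range_le ha hpartial)

lemma summable_sq_of_summable_add_one_half_sq_mul_sq {a : ℕ → ℝ}
    (hsum : Summable fun k : ℕ => ((k : ℝ) + 1 / 2) ^ 2 * a k ^ 2) :
    Summable fun k => a k ^ 2 := by
  refine (hsum.mul_left 4).of_nonneg_of_le (fun k => sq_nonneg _) fun k => ?_
  have hk : (1 : ℝ) ≤ 4 * ((k : ℝ) + 1 / 2) ^ 2 := by nlinarith [(Nat.cast_nonneg k : (0 : ℝ) ≤ k)]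
  nlinarith [mul_le_mul_of_nonneg_right hk (sq_nonneg (a k))]

lemma sq_tsum_le_pi_div_two_mul {a : ℕ → ℝ} (ha : ∀ k, 0 ≤ a k)
    (hsum : Summable fun k : ℕ => ((k : ℝ) + 1 / 2) ^ 2 * a k ^ 2) {r : ℝ} (hr : 0 < r) :
    (∑' k, a k) ^ 2 ≤
      π / 2 * (r * ∑' k, a k ^ 2 + r⁻¹ * ∑' k : ℕ, ((k : ℝ) + 1 / 2) ^ 2 * a k ^ 2) := by
  have hinv : (fun k : ℕ => ((r ^ 2 + ((k : ℝ) + 1 / 2) ^ 2) / r)⁻¹) =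
      fun k : ℕ => r / (r ^ 2 + ((k : ℝ) + 1 / 2) ^ 2) := by
    simp only [inv_div]
  have hwa : (fun k : ℕ => (r ^ 2 + ((k : ℝ) + 1 / 2) ^ 2) / r * a k ^ 2) =
      fun k : ℕ => r * a k ^ 2 + r⁻¹ * (((k : ℝ) + 1 / 2) ^ 2 * a k ^ 2) := by
    funext k
    field_simp
  have hsq := summable_sq_of_summable_add_one_half_sq_mul_sq hsum
  have hcs := sq_tsum_le_tsum_inv_mul_tsum_mul_sq ha (fun k => by positivity)
    (hinv ▸ (hasSum_div_sq_add_add_one_half_sq hr.le).summable)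
    (hwa ▸ (hsq.mul_left r).add (hsum.mul_left r⁻¹))
  rw [hinv, hwa, Summable.tsum_add (hsq.mul_left r) (hsum.mul_left r⁻¹), tsum_mul_left,
    tsum_mul_left] at hcs
  refine hcs.trans (mul_le_mul_of_nonneg_right (tsum_div_sq_add_add_one_half_sq_le hr.le) ?_)
  exact add_nonneg (mul_nonneg hr.le (tsum_nonneg fun k => sq_nonneg _))
    (mul_nonneg (inv_nonneg.2 hr.le) (tsum_nonneg fun k => by positivity))

/-- `a k` stands for the paper's `a_{k+1}`, so the weight `(k - 1/2)²` becomes `(k + 1/2)²`. -/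
theorem carlson_landau_inequality
    (a : ℕ → ℝ) (ha : ∀ k, 0 ≤ a k)
    (hsum : Summable (fun k : ℕ => ((k : ℝ) + 1/2) ^ 2 * a k ^ 2)) :
    (∑' k : ℕ, a k) ^ 2 ≤
      π * Real.sqrt (∑' k : ℕ, a k ^ 2) *
        Real.sqrt (∑' k : ℕ, ((k : ℝ) + 1/2) ^ 2 * a k ^ 2) := by
  by_cases hzero : ∀ k, a k = 0
  · simp [hzero]
  push Not at hzero
  obtain ⟨k, hk⟩ := hzero
  have hak : 0 < a k ^ 2 := pow_pos ((ha k).lt_of_ne' hk) 2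
  set A := ∑' k : ℕ, a k ^ 2
  set B := ∑' k : ℕ, ((k : ℝ) + 1/2) ^ 2 * a k ^ 2
  have hA : 0 < A := hak.trans_le <|
    (summable_sq_of_summable_add_one_half_sq_mul_sq hsum).le_tsum k fun j _ => sq_nonneg _
  have hB : 0 < B := (mul_pos (by positivity) hak).trans_le <|
    hsum.le_tsum k fun j _ => by positivity
  calc (∑' k : ℕ, a k) ^ 2 ≤ π / 2 * (√B / √A * A + (√B / √A)⁻¹ * B) :=
        sq_tsum_le_pi_div_two_mul ha hsum (by positivity)
    _ = π * √A * √B := by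
        field_simp
        rw [sq_sqrt hA.le, sq_sqrt hB.le]
        ring
end

section
/- Let L > 0 and let u : [0,L] → ℝ (or ℂ) be absolutely continuous with u(0) = u(L) = 0, u' ∈ L²(0,L), and u not identically zero. Then sup_{x ∈ [0,L]} |u(x)|² ≤ ‖u‖·‖u'‖·(1 − 2·exp(−L·‖u'‖/‖u‖)), where ‖·‖ = ‖·‖_{L²(0,L)}. -/
open MeasureTheory Real

/-!
If `w` solves the Riccati equation `w' = k² - w²`, then
`(w ‖u‖²)' = ‖u'‖² + k² ‖u‖² - ‖u' - w u‖²`, so `w ‖u‖²` grows by at most `∫ ‖u'‖² + k² ‖u‖²`.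
Running such a weight `k coth (k t + φ)` in from each endpoint, with `φ` tuned so that it equals
`k (1 + 2 e^{-2kx})` at `x`, gives `k (2 + 4 e^{-kL}) |u x|² ≤ ‖u'‖² + k² ‖u‖²`. With
`t = L ‖u'‖ / ‖u‖` and `k = (1 - 2 e^{-t}) ‖u'‖ / ‖u‖` this is the claim once `t ≥ 3`. For `k = 0`
the weights `1 / (t + φ)`, `φ → 0`, give `4 |u x|² ≤ L ‖u'‖²`; hence `t ≥ 2`, and for `t ≤ 3` this
cruder bound already suffices.
-/

open Set intervalIntegral Filter Topology

theorem div_four_le_one_sub_two_mul_exp_neg {t : ℝ} (h2 : 2 ≤ t) (h3 : t ≤ 3) :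
    t / 4 ≤ 1 - 2 * exp (-t) := by
  have hexp := quadratic_le_exp_of_nonneg (by linarith : (0 : ℝ) ≤ t)
  have hprod : exp (-t) * exp t = 1 := by rw [← exp_add, neg_add_cancel, exp_zero]
  nlinarith [exp_pos (-t), mul_le_mul_of_nonneg_left hexp (exp_pos (-t)).le]

theorem exists_one_add_sq_le_of_three_le {t : ℝ} (ht : 3 ≤ t) :
    ∃ κ > 0, 1 + κ ^ 2 ≤ κ * (1 - 2 * exp (-t)) * (2 + 4 * exp (-(κ * t))) := by
  set s := exp (-t) with hs
  have hs_pos : 0 < s := exp_pos _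
  have hs_le : s ≤ 1 / 8 := by
    have hexp := quadratic_le_exp_of_nonneg (by linarith : (0 : ℝ) ≤ t)
    have hprod : s * exp t = 1 := by rw [hs, ← exp_add, neg_add_cancel, exp_zero]
    nlinarith
  have hκt : exp (-((1 - 2 * s) * t)) = s * exp (2 * s * t) := by
    rw [hs, ← exp_add]; ring_nf
  have hgrowth : 1 + 2 * s * t ≤ exp (2 * s * t) := by linarith [add_one_le_exp (2 * s * t)]
  refine ⟨1 - 2 * s, by linarith, ?_⟩
  rw [hκt]
  have key : 1 + (1 - 2 * s) ^ 2 ≤ (1 - 2 * s) ^ 2 * (2 + 4 * s * (1 + 2 * s * t)) := by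
    nlinarith [mul_pos hs_pos hs_pos, mul_nonneg (sq_nonneg s) (by linarith : (0 : ℝ) ≤ t - 3)]
  nlinarith [mul_le_mul_of_nonneg_left hgrowth (by positivity : (0 : ℝ) ≤ 4 * s * (1 - 2 * s) ^ 2)]

theorem le_mul_mul_one_sub_two_mul_exp_neg {M a b L : ℝ} (ha : 0 ≤ a) (hb : 0 ≤ b)
    (hab : 2 * a ≤ L * b) (hM : M ≤ L * b ^ 2 / 4)
    (hk : ∀ k > 0, k * (2 + 4 * exp (-(k * L))) * M ≤ b ^ 2 + k ^ 2 * a ^ 2) :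
    M ≤ a * b * (1 - 2 * exp (-(L * b / a))) := by
  rcases ha.eq_or_lt with rfl | ha
  · rw [zero_mul, zero_mul]
    by_contra! hM_pos
    have h := hk (b ^ 2 / M + 1) (by positivity)
    have hexp := exp_pos (-((b ^ 2 / M + 1) * L))
    have hdiv : b ^ 2 / M * M = b ^ 2 := div_mul_cancel₀ _ hM_pos.ne'
    nlinarith
  have hb : 0 < b := hb.lt_of_ne (by rintro rfl; nlinarith)
  set t := L * b / a with ht
  rcases le_total t 3 with h3 | h3
  · calc M ≤ a * b * (t / 4) := by rw [ht]; field_simp; linarith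
      _ ≤ a * b * (1 - 2 * exp (-t)) := by
        gcongr
        exact div_four_le_one_sub_two_mul_exp_neg (by rw [ht, le_div_iff₀ ha]; linarith) h3
  · obtain ⟨κ, hκ, hκ_le⟩ := exists_one_add_sq_le_of_three_le h3
    have h := hk (κ * b / a) (by positivity)
    rw [show κ * b / a * L = κ * t by rw [ht]; field_simp] at h
    rw [← mul_le_mul_iff_of_pos_left (by positivity : 0 < κ * b * (2 + 4 * exp (-(κ * t))))]
    calc κ * b * (2 + 4 * exp (-(κ * t))) * M
        = a * (κ * b / a * (2 + 4 * exp (-(κ * t))) * M) := by field_simp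
      _ ≤ a * (b ^ 2 + (κ * b / a) ^ 2 * a ^ 2) := by gcongr
      _ = a * b ^ 2 * (1 + κ ^ 2) := by field_simp
      _ ≤ a * b ^ 2 * (κ * (1 - 2 * exp (-t)) * (2 + 4 * exp (-(κ * t)))) := by gcongr
      _ = κ * b * (2 + 4 * exp (-(κ * t))) * (a * b * (1 - 2 * exp (-t))) := by ring

/-- `k * coth (k * t + log c / 2)`, a solution of `w' = k ^ 2 - w ^ 2`. -/
noncomputable def cothWeight (k c t : ℝ) : ℝ :=
  k * (c * exp (2 * k * t) + 1) / (c * exp (2 * k * t) - 1)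

theorem hasDerivAt_cothWeight {k c t : ℝ} (h : c * exp (2 * k * t) ≠ 1) :
    HasDerivAt (cothWeight k c) (k ^ 2 - cothWeight k c t ^ 2) t := by
  have hE : HasDerivAt (fun s => c * exp (2 * k * s)) (c * exp (2 * k * t) * (2 * k)) t := by
    have := ((hasDerivAt_id t).const_mul (2 * k)).exp.const_mul c
    simpa [mul_assoc] using this
  have hD : c * exp (2 * k * t) - 1 ≠ 0 := sub_ne_zero.2 h
  refine (((hE.add_const 1).const_mul k).div (hE.sub_const 1) hD).congr_deriv ?_
  unfold cothWeight
  generalize c * exp (2 * k * t) = e at hD ⊢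
  field_simp
  ring

theorem cothWeight_self (k y : ℝ) :
    cothWeight k (1 + exp (-(2 * k * y))) y = k * (1 + 2 * exp (-(2 * k * y))) := by
  have h : (1 + exp (-(2 * k * y))) * exp (2 * k * y) = exp (2 * k * y) + 1 := by
    rw [add_mul, ← exp_add]; simp
  unfold cothWeight
  rw [h, add_sub_cancel_right, exp_neg]
  field_simp
  ring

section

variable {E : Type*} [NormedAddCommGroup E] [InnerProductSpace ℝ E]

theorem sub_le_integral_of_riccati {u u' : ℝ → E} {w : ℝ → ℝ} {a b k : ℝ} (hab : a ≤ b)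
    (hu : ContinuousOn u (Icc a b)) (hu' : ∀ x ∈ Ioo a b, HasDerivAt u (u' x) x)
    (hint : IntegrableOn (fun x => ‖u' x‖ ^ 2) (Icc a b))
    (hw : ∀ x ∈ Icc a b, HasDerivAt w (k ^ 2 - w x ^ 2) x) :
    w b * ‖u b‖ ^ 2 - w a * ‖u a‖ ^ 2 ≤ ∫ x in a..b, ‖u' x‖ ^ 2 + k ^ 2 * ‖u x‖ ^ 2 := by
  have hw_cont : ContinuousOn w (Icc a b) := fun x hx => (hw x hx).continuousAt.continuousWithinAt
  refine sub_le_integral_of_hasDeriv_right_of_le hab (hw_cont.mul (hu.norm.pow 2))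
    (fun x hx => (((hw x (Ioo_subset_Icc_self hx)).mul (hu' x hx).norm_sq)).hasDerivWithinAt)
    (hint.add ((hu.norm.pow 2).integrableOn_Icc.const_mul _)) fun x _ => ?_
  have hsq : 0 ≤ ‖u' x - w x • u x‖ ^ 2 := sq_nonneg _
  rw [norm_sub_sq_real, real_inner_smul_right, norm_smul, mul_pow, Real.norm_eq_abs, sq_abs,
    real_inner_comm] at hsq
  linarith

theorem mul_norm_sq_le_integral_of_riccati {u u' : ℝ → E} {w v : ℝ → ℝ} {L k x₀ : ℝ}
    (hx₀ : x₀ ∈ Icc 0 L) (hu : ContinuousOn u (Icc 0 L))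
    (hu' : ∀ x ∈ Ioo 0 L, HasDerivAt u (u' x) x) (hu0 : u 0 = 0) (huL : u L = 0)
    (hint : IntegrableOn (fun x => ‖u' x‖ ^ 2) (Icc 0 L))
    (hw : ∀ t ∈ Icc 0 x₀, HasDerivAt w (k ^ 2 - w t ^ 2) t)
    (hv : ∀ t ∈ Icc 0 (L - x₀), HasDerivAt v (k ^ 2 - v t ^ 2) t) :
    (w x₀ + v (L - x₀)) * ‖u x₀‖ ^ 2 ≤ ∫ x in 0..L, ‖u' x‖ ^ 2 + k ^ 2 * ‖u x‖ ^ 2 := by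
  obtain ⟨h0x, hxL⟩ := hx₀
  have hleft : Icc 0 x₀ ⊆ Icc 0 L := Icc_subset_Icc_right hxL
  have hright : Icc x₀ L ⊆ Icc 0 L := Icc_subset_Icc_left h0x
  have hint' : IntegrableOn (fun x => ‖u' x‖ ^ 2 + k ^ 2 * ‖u x‖ ^ 2) (Icc 0 L) :=
    hint.add ((hu.norm.pow 2).integrableOn_Icc.const_mul _)
  have h₁ := sub_le_integral_of_riccati h0x (hu.mono hleft)
    (fun x hx => hu' x ⟨hx.1, hx.2.trans_le hxL⟩) (hint.mono_set hleft) hw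
  have h₂ := sub_le_integral_of_riccati (w := fun t => -v (L - t)) hxL (hu.mono hright)
    (fun x hx => hu' x ⟨h0x.trans_lt hx.1, hx.2⟩) (hint.mono_set hright) fun t ht =>
      ((hv (L - t) ⟨by linarith [ht.2], by linarith [ht.1]⟩).comp_const_sub L).neg.congr_deriv
        (by ring)
  rw [← integral_add_adjacent_intervals
    (hint'.mono_set (by rwa [uIcc_of_le h0x])).intervalIntegrable
    (hint'.mono_set (by rwa [uIcc_of_le hxL])).intervalIntegrable]
  simp only [hu0, huL, norm_zero, ne_eq, OfNat.ofNat_ne_zero, not_false_eq_true, zero_pow,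
    mul_zero, sub_zero, sub_self, zero_sub] at h₁ h₂
  linarith

theorem mul_two_add_four_mul_exp_neg_mul_norm_sq_le {u u' : ℝ → E} {L k x₀ : ℝ} (hk : 0 ≤ k)
    (hx₀ : x₀ ∈ Icc 0 L) (hu : ContinuousOn u (Icc 0 L))
    (hu' : ∀ x ∈ Ioo 0 L, HasDerivAt u (u' x) x) (hu0 : u 0 = 0) (huL : u L = 0)
    (hint : IntegrableOn (fun x => ‖u' x‖ ^ 2) (Icc 0 L)) :
    k * (2 + 4 * exp (-(k * L))) * ‖u x₀‖ ^ 2 ≤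
      (∫ x in 0..L, ‖u' x‖ ^ 2) + k ^ 2 * ∫ x in 0..L, ‖u x‖ ^ 2 := by
  have hL : 0 ≤ L := hx₀.1.trans hx₀.2
  have hsq : ContinuousOn (fun x => ‖u x‖ ^ 2) (Icc 0 L) := hu.norm.pow 2
  rw [← intervalIntegral.integral_const_mul, ← integral_add
    ((intervalIntegrable_iff_integrableOn_Icc_of_le hL).2 hint)
    ((hsq.intervalIntegrable_of_Icc hL).const_mul _)]
  have hweight : ∀ y t, 0 ≤ t → HasDerivAt (cothWeight k (1 + exp (-(2 * k * y))))
      (k ^ 2 - cothWeight k (1 + exp (-(2 * k * y))) t ^ 2) t := fun y t ht =>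
    hasDerivAt_cothWeight (one_lt_mul_of_lt_of_le (by linarith [exp_pos (-(2 * k * y))])
      (one_le_exp (by positivity))).ne'
  have h := mul_norm_sq_le_integral_of_riccati hx₀ hu hu' hu0 huL hint
    (fun t ht => hweight x₀ t ht.1) (fun t ht => hweight (L - x₀) t ht.1)
  rw [cothWeight_self, cothWeight_self] at h
  refine le_trans (mul_le_mul_of_nonneg_right ?_ (sq_nonneg _)) h
  have hamgm : 2 * exp (-(k * L)) ≤ exp (-(2 * k * x₀)) + exp (-(2 * k * (L - x₀))) :=
    calc 2 * exp (-(k * L)) = 2 * exp (-(k * x₀)) * exp (-(k * (L - x₀))) := by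
          rw [mul_assoc, ← exp_add]; ring_nf
      _ ≤ exp (-(k * x₀)) ^ 2 + exp (-(k * (L - x₀))) ^ 2 := two_mul_le_add_sq _ _
      _ = exp (-(2 * k * x₀)) + exp (-(2 * k * (L - x₀))) := by
          rw [← exp_nat_mul, ← exp_nat_mul]; ring_nf
  nlinarith

theorem four_mul_norm_sq_le {u u' : ℝ → E} {L x₀ : ℝ}
    (hx₀ : x₀ ∈ Icc 0 L) (hu : ContinuousOn u (Icc 0 L))
    (hu' : ∀ x ∈ Ioo 0 L, HasDerivAt u (u' x) x) (hu0 : u 0 = 0) (huL : u L = 0)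
    (hint : IntegrableOn (fun x => ‖u' x‖ ^ 2) (Icc 0 L)) :
    4 * ‖u x₀‖ ^ 2 ≤ L * ∫ x in 0..L, ‖u' x‖ ^ 2 := by
  set B := ∫ x in 0..L, ‖u' x‖ ^ 2
  have hweight : ∀ φ : ℝ, 0 < φ → ∀ t : ℝ, 0 ≤ t →
      HasDerivAt (fun s => (s + φ)⁻¹) (0 ^ 2 - ((t + φ)⁻¹) ^ 2) t :=
    fun φ hφ t ht => ((hasDerivAt_id t).add_const φ).inv (by positivity) |>.congr_deriv
      (by simp [inv_pow, div_eq_mul_inv])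
  have hφ_bound : ∀ φ > 0, 4 * ‖u x₀‖ ^ 2 ≤ (L + 2 * φ) * B := fun φ hφ => by
    have h := mul_norm_sq_le_integral_of_riccati hx₀ hu hu' hu0 huL hint
      (fun t ht => hweight φ hφ t ht.1) (fun t ht => hweight φ hφ t ht.1)
    simp only [ne_eq, OfNat.ofNat_ne_zero, not_false_eq_true, zero_pow, zero_mul, add_zero] at h
    have hp : 0 < x₀ + φ := by linarith [hx₀.1]
    have hq : 0 < L - x₀ + φ := by linarith [hx₀.2]
    have hhm : 4 ≤ (L + 2 * φ) * ((x₀ + φ)⁻¹ + (L - x₀ + φ)⁻¹) := by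
      rw [show L + 2 * φ = (x₀ + φ) + (L - x₀ + φ) by ring]
      field_simp
      nlinarith [sq_nonneg (x₀ + φ - (L - x₀ + φ))]
    nlinarith [mul_le_mul_of_nonneg_right hhm (sq_nonneg ‖u x₀‖), sq_nonneg ‖u x₀‖]
  have hlim : Tendsto (fun φ => (L + 2 * φ) * B) (𝓝[>] 0) (𝓝 (L * B)) :=
    (Continuous.tendsto' (by fun_prop) 0 _ (by ring)).mono_left nhdsWithin_le_nhds
  exact ge_of_tendsto hlim (eventually_nhdsWithin_of_forall hφ_bound)

end

theorem dirichlet_interpolation_inequality_refined_general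
    (L : ℝ) (u u' : ℝ → ℂ)
    (hderiv : ∀ x ∈ Set.Icc (0:ℝ) L, HasDerivWithinAt u (u' x) (Set.Icc (0:ℝ) L) x)
    (h0 : u 0 = 0) (hLend : u L = 0)
    (hu' : IntervalIntegrable (fun x => ‖u' x‖ ^ 2) volume 0 L) :
    ∀ x ∈ Set.Icc (0:ℝ) L, ‖u x‖ ^ 2 ≤
      Real.sqrt (∫ x in (0:ℝ)..L, ‖u x‖ ^ 2) *
        Real.sqrt (∫ x in (0:ℝ)..L, ‖u' x‖ ^ 2) *
        (1 - 2 * Real.exp (-(L * Real.sqrt (∫ x in (0:ℝ)..L, ‖u' x‖ ^ 2) /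
          Real.sqrt (∫ x in (0:ℝ)..L, ‖u x‖ ^ 2)))) := by
  intro x hx
  have hL : 0 ≤ L := hx.1.trans hx.2
  have hu : ContinuousOn u (Icc 0 L) := fun y hy => (hderiv y hy).continuousWithinAt
  have hu_deriv : ∀ y ∈ Ioo 0 L, HasDerivAt u (u' y) y := fun y hy =>
    (hderiv y (Ioo_subset_Icc_self hy)).hasDerivAt (Icc_mem_nhds hy.1 hy.2)
  have hint := (intervalIntegrable_iff_integrableOn_Icc_of_le hL).1 hu'
  set A := ∫ y in (0:ℝ)..L, ‖u y‖ ^ 2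
  set B := ∫ y in (0:ℝ)..L, ‖u' y‖ ^ 2
  have hA : 0 ≤ A := integral_nonneg hL fun y _ => sq_nonneg _
  have hB : 0 ≤ B := integral_nonneg hL fun y _ => sq_nonneg _
  have hpoint : ∀ y ∈ Icc 0 L, ‖u y‖ ^ 2 ≤ L * B / 4 := fun y hy => by
    linarith [four_mul_norm_sq_le hy hu hu_deriv h0 hLend hint]
  have hAB : 4 * A ≤ L ^ 2 * B := by
    have hsq : ContinuousOn (fun y => ‖u y‖ ^ 2) (Icc 0 L) := hu.norm.pow 2
    have := integral_mono_on hL (hsq.intervalIntegrable_of_Icc (μ := volume) hL)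
      intervalIntegrable_const hpoint
    rw [intervalIntegral.integral_const, smul_eq_mul] at this
    nlinarith
  refine le_mul_mul_one_sub_two_mul_exp_neg (sqrt_nonneg A) (sqrt_nonneg B) ?_ ?_ fun k hk => ?_
  · rw [← sqrt_sq hL, ← sqrt_mul (sq_nonneg L), show (2 : ℝ) = sqrt 4 by norm_num,
      ← sqrt_mul (by norm_num)]
    exact sqrt_le_sqrt hAB
  · rw [sq_sqrt hB]; exact hpoint x hx
  · rw [sq_sqrt hA, sq_sqrt hB]
    exact mul_two_add_four_mul_exp_neg_mul_norm_sq_le hk.le hx hu hu_deriv h0 hLend hint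

/-- The refined interpolation inequality for `u ∈ H¹₀(0,L)`, `u ≢ 0`, with
sharp exponential correction term:
`sup_{x∈[0,L]} |u(x)|² ≤ ‖u‖·‖u'‖·(1 − 2 exp(−L‖u'‖/‖u‖))`. -/
theorem dirichlet_interpolation_inequality_refined
    (L : ℝ) (hL : 0 < L) (u u' : ℝ → ℂ)
    (hderiv : ∀ x ∈ Set.Icc (0:ℝ) L, HasDerivWithinAt u (u' x) (Set.Icc (0:ℝ) L) x)
    (h0 : u 0 = 0) (hLend : u L = 0)
    (hu' : IntervalIntegrable (fun x => ‖u' x‖ ^ 2) volume 0 L)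
    (hne : ∃ x ∈ Set.Icc (0:ℝ) L, u x ≠ 0) :
    ∀ x ∈ Set.Icc (0:ℝ) L, ‖u x‖ ^ 2 ≤
      Real.sqrt (∫ x in (0:ℝ)..L, ‖u x‖ ^ 2) *
        Real.sqrt (∫ x in (0:ℝ)..L, ‖u' x‖ ^ 2) *
        (1 - 2 * Real.exp (-(L * Real.sqrt (∫ x in (0:ℝ)..L, ‖u' x‖ ^ 2) /
          Real.sqrt (∫ x in (0:ℝ)..L, ‖u x‖ ^ 2)))) :=
  dirichlet_interpolation_inequality_refined_general L u u' hderiv h0 hLend hu'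
end
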